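/- There exists γ ∈ (0,1) such that for any two distinct dyadic rectangles R ≠ R' in [0,1)², the associated points z_R, z_{R'} ∈ 𝔻² satisfy |⟨g_{z_R}, g_{z_{R'}}⟩|² ≤ 1-γ². In particular, the collection {z_R : R dyadic rectangle} is weakly separated with a uniform constant. -/

import Mathlib

open MeasureTheory Complex
open scoped BigOperators ENNReal

noncomputable section

/-- The open unit polydisc `𝔻^d ⊆ ℂ^d`. -/
def polydisc (d : ℕ) : Set (Fin d → ℂ) := {z | ∀ i, ‖z i‖ < 1}

/-- The weight `∏_{i=1}^d (1 - |z^i|²)`. -/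
def wt (d : ℕ) (z : Fin d → ℂ) : ℝ := ∏ i, (1 - ‖z i‖ ^ 2)

/-- The point `(e^{2πiθ_1}, …, e^{2πiθ_d})` of the torus `𝕋^d`. -/
def bd (d : ℕ) (θ : Fin d → ℝ) : Fin d → ℂ :=
  fun i => Complex.exp (((2 * Real.pi * θ i : ℝ) : ℂ) * Complex.I)

/-- The fundamental domain `[0,1)^d` parametrizing `𝕋^d`. -/
def cube (d : ℕ) : Set (Fin d → ℝ) := Set.univ.pi fun _ => Set.Ico (0 : ℝ) 1


/-- The modulus of the inner product of normalized Szegő kernels: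
`|⟨g_z, g_w⟩| = ∏_i √((1-|z^i|²)(1-|w^i|²)) / |1 - conj(z^i) w^i|`. -/
def gInnerAbs (d : ℕ) (z w : Fin d → ℂ) : ℝ :=
  ∏ i, Real.sqrt ((1 - ‖z i‖ ^ 2) * (1 - ‖w i‖ ^ 2)) /
    ‖1 - (starRingEnd ℂ) (z i) * w i‖

/-- The point `z_R ∈ 𝔻²` associated to the dyadic rectangle
`R = [j₁/2^N₁, (j₁+1)/2^N₁) × [j₂/2^N₂, (j₂+1)/2^N₂)`:
`z_R = (√(1-|I|) e^{2πiθ₁}, √(1-|J|) e^{2πiθ₂})` with `θ₁, θ₂` the midpoints. -/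
def zRect (N₁ j₁ N₂ j₂ : ℕ) : Fin 2 → ℂ :=
  ![(Real.sqrt (1 - (2 : ℝ)⁻¹ ^ N₁) : ℂ) *
      Complex.exp (((2 * Real.pi * (((j₁ : ℝ) + 1 / 2) / 2 ^ N₁) : ℝ) : ℂ) * Complex.I),
    (Real.sqrt (1 - (2 : ℝ)⁻¹ ^ N₂) : ℂ) *
      Complex.exp (((2 * Real.pi * (((j₂ : ℝ) + 1 / 2) / 2 ^ N₂) : ℝ) : ℂ) * Complex.I)]



/-!
With `P = (1 - |a|²)(1 - |b|²)` one has `|1 - conj a · b|² = P + |a - b|²`, so the squared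
one-variable factor of `|⟨g_z, g_w⟩|` is `P / (P + |a - b|²)`: it is at most `1`, and at most `8/9`
as soon as `P ≤ 8 |a - b|²`. For the points of two distinct dyadic intervals this separation holds.
If the lengths `u > v` differ then `v ≤ u/2`, and already the radii `√(1 - v) - √(1 - u) ≥ u/4`
differ enough. If the lengths agree, `u = 2^{-N}`, the arguments differ by `2πku` with
`1 ≤ k ≤ 2^N - 1`, and Jordan's inequality gives `|a - b| = 2√(1 - u) |sin (πku)| ≥ 4√(1 - u) u`.
Since two distinct rectangles differ in at least one side, `γ = 1/3` works.
-/

open Real ComplexConjugate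

section SzegoFactor

theorem Complex.norm_one_sub_conj_mul_sq (a b : ℂ) :
    ‖1 - conj a * b‖ ^ 2 = (1 - ‖a‖ ^ 2) * (1 - ‖b‖ ^ 2) + ‖a - b‖ ^ 2 := by
  simp only [Complex.sq_norm, Complex.normSq_apply, Complex.sub_re, Complex.sub_im,
    Complex.mul_re, Complex.mul_im, Complex.conj_re, Complex.conj_im, Complex.one_re,
    Complex.one_im]
  ring

def szegoFactor (a b : ℂ) : ℝ :=
  √((1 - ‖a‖ ^ 2) * (1 - ‖b‖ ^ 2)) / ‖1 - conj a * b‖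

variable {a b : ℂ}

theorem mul_one_sub_norm_sq_nonneg (ha : ‖a‖ ≤ 1) (hb : ‖b‖ ≤ 1) :
    0 ≤ (1 - ‖a‖ ^ 2) * (1 - ‖b‖ ^ 2) :=
  mul_nonneg (by nlinarith [norm_nonneg a]) (by nlinarith [norm_nonneg b])

theorem szegoFactor_sq (ha : ‖a‖ ≤ 1) (hb : ‖b‖ ≤ 1) :
    szegoFactor a b ^ 2 =
      (1 - ‖a‖ ^ 2) * (1 - ‖b‖ ^ 2) / ((1 - ‖a‖ ^ 2) * (1 - ‖b‖ ^ 2) + ‖a - b‖ ^ 2) := by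
  rw [szegoFactor, div_pow, sq_sqrt (mul_one_sub_norm_sq_nonneg ha hb),
    Complex.norm_one_sub_conj_mul_sq]

theorem szegoFactor_sq_le_one (ha : ‖a‖ ≤ 1) (hb : ‖b‖ ≤ 1) : szegoFactor a b ^ 2 ≤ 1 := by
  have hP := mul_one_sub_norm_sq_nonneg ha hb
  rw [szegoFactor_sq ha hb]
  exact div_le_one_of_le₀ (le_add_of_nonneg_right (sq_nonneg _)) (by positivity)

theorem szegoFactor_sq_le_of_le_mul_norm_sub_sq {c : ℝ} (hc : 0 < c)
    (ha : ‖a‖ ≤ 1) (hb : ‖b‖ ≤ 1)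
    (hsep : (1 - ‖a‖ ^ 2) * (1 - ‖b‖ ^ 2) ≤ c * ‖a - b‖ ^ 2) :
    szegoFactor a b ^ 2 ≤ c / (1 + c) := by
  have hP := mul_one_sub_norm_sq_nonneg ha hb
  rw [szegoFactor_sq ha hb]
  rcases hP.eq_or_lt with hP0 | hP0
  · rw [← hP0, zero_div]; positivity
  rw [div_le_div_iff₀ (by positivity) (by positivity)]
  nlinarith

end SzegoFactor

theorem two_mul_min_le_sin_pi_mul {s : ℝ} (hs₀ : 0 ≤ s) (hs₁ : s ≤ 1) :
    2 * min s (1 - s) ≤ Real.sin (π * s) := by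
  have jordan : ∀ t, 0 ≤ t → t ≤ 1 / 2 → 2 * t ≤ Real.sin (π * t) := fun t ht₀ ht₁ => by
    have h := mul_le_sin (x := π * t) (by positivity) (by nlinarith [pi_pos])
    rwa [← mul_assoc, div_mul_cancel₀ _ pi_ne_zero] at h
  rcases le_total s (1 / 2) with h | h
  · exact (mul_le_mul_of_nonneg_left (min_le_left _ _) zero_le_two).trans (jordan s hs₀ h)
  · rw [show π * s = π - π * (1 - s) by ring, Real.sin_pi_sub]
    exact (mul_le_mul_of_nonneg_left (min_le_right _ _) zero_le_two).trans
      (jordan _ (by linarith) (by linarith))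

theorem mul_le_eight_mul_sq_sqrt_sub_sqrt {u v : ℝ} (hv : 0 ≤ v) (hvu : 2 * v ≤ u)
    (hu : u ≤ 1) : u * v ≤ 8 * (√(1 - v) - √(1 - u)) ^ 2 := by
  set x := √(1 - u)
  set y := √(1 - v)
  have hx : x ^ 2 = 1 - u := sq_sqrt (by linarith)
  have hy : y ^ 2 = 1 - v := sq_sqrt (by linarith)
  have hx₁ : x ≤ 1 := sqrt_le_one.mpr (by linarith)
  have hy₁ : y ≤ 1 := sqrt_le_one.mpr (by linarith)
  have hxy : x ≤ y := sqrt_le_sqrt (by linarith)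
  have hgap : u / 4 ≤ y - x := by
    have : u / 2 ≤ (y - x) * (y + x) := by nlinarith
    nlinarith [mul_le_mul_of_nonneg_left (add_le_add hy₁ hx₁) (sub_nonneg.mpr hxy)]
  nlinarith

def dyadicPoint (N j : ℕ) : ℂ :=
  (√(1 - (2 : ℝ)⁻¹ ^ N) : ℂ) *
    Complex.exp (((2 * π * (((j : ℝ) + 1 / 2) / 2 ^ N) : ℝ) : ℂ) * Complex.I)

theorem zRect_eq (N₁ j₁ N₂ j₂ : ℕ) :
    zRect N₁ j₁ N₂ j₂ = ![dyadicPoint N₁ j₁, dyadicPoint N₂ j₂] := rfl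

section DyadicPoint

variable (N j : ℕ)

theorem norm_dyadicPoint : ‖dyadicPoint N j‖ = √(1 - (2 : ℝ)⁻¹ ^ N) := by
  rw [dyadicPoint, norm_mul, Complex.norm_exp_ofReal_mul_I, mul_one, Complex.norm_real,
    norm_of_nonneg (sqrt_nonneg _)]

theorem norm_dyadicPoint_le_one : ‖dyadicPoint N j‖ ≤ 1 := by
  rw [norm_dyadicPoint]
  exact sqrt_le_one.mpr (by linarith [pow_pos (by norm_num : (0 : ℝ) < 2⁻¹) N])

theorem one_sub_norm_dyadicPoint_sq : 1 - ‖dyadicPoint N j‖ ^ 2 = (2 : ℝ)⁻¹ ^ N := by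
  have h : (2 : ℝ)⁻¹ ^ N ≤ 1 := pow_le_one₀ (by norm_num) (by norm_num)
  rw [norm_dyadicPoint, sq_sqrt (by linarith)]
  ring

theorem norm_dyadicPoint_sub_same_level (j' : ℕ) :
    ‖dyadicPoint N j' - dyadicPoint N j‖ =
      √(1 - (2 : ℝ)⁻¹ ^ N) * (2 * |Real.sin (π * (((j' : ℝ) - j) / 2 ^ N))|) := by
  have h : dyadicPoint N j' - dyadicPoint N j =
      (√(1 - (2 : ℝ)⁻¹ ^ N) : ℂ) *
        Complex.exp (((2 * π * (((j : ℝ) + 1 / 2) / 2 ^ N) : ℝ) : ℂ) * Complex.I) *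
        (Complex.exp (Complex.I * ((2 * π * (((j' : ℝ) - j) / 2 ^ N) : ℝ) : ℂ)) - 1) := by
    have hrot : Complex.exp (((2 * π * (((j' : ℝ) + 1 / 2) / 2 ^ N) : ℝ) : ℂ) * Complex.I) =
        Complex.exp (((2 * π * (((j : ℝ) + 1 / 2) / 2 ^ N) : ℝ) : ℂ) * Complex.I) *
          Complex.exp (Complex.I * ((2 * π * (((j' : ℝ) - j) / 2 ^ N) : ℝ) : ℂ)) := by
      rw [← Complex.exp_add]
      congr 1
      push_cast
      ring
    rw [dyadicPoint, dyadicPoint, hrot]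
    ring
  rw [h, norm_mul, norm_mul, Complex.norm_real, norm_of_nonneg (sqrt_nonneg _),
    Complex.norm_exp_ofReal_mul_I, mul_one, Complex.norm_exp_I_mul_ofReal_sub_one, norm_mul,
    Real.norm_two, Real.norm_eq_abs]
  congr 4
  ring

end DyadicPoint

section Separation

variable {N j N' j' : ℕ}

theorem dyadicPoint_separated_of_level_lt (hN : N < N') :
    (1 - ‖dyadicPoint N j‖ ^ 2) * (1 - ‖dyadicPoint N' j'‖ ^ 2) ≤
      8 * ‖dyadicPoint N j - dyadicPoint N' j'‖ ^ 2 := by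
  have hv : (2 : ℝ) * 2⁻¹ ^ N' ≤ 2⁻¹ ^ N := by
    calc (2 : ℝ) * 2⁻¹ ^ N' ≤ 2 * 2⁻¹ ^ (N + 1) :=
          mul_le_mul_of_nonneg_left (pow_le_pow_of_le_one (by norm_num) (by norm_num) hN)
            zero_le_two
      _ = 2⁻¹ ^ N := by ring
  have hnorm : (√(1 - (2 : ℝ)⁻¹ ^ N') - √(1 - 2⁻¹ ^ N)) ^ 2 ≤
      ‖dyadicPoint N j - dyadicPoint N' j'‖ ^ 2 := by
    rw [← norm_dyadicPoint N j, ← norm_dyadicPoint N' j', ← sq_abs, abs_sub_comm]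
    exact pow_le_pow_left₀ (abs_nonneg _) (abs_norm_sub_norm_le _ _) 2
  rw [one_sub_norm_dyadicPoint_sq, one_sub_norm_dyadicPoint_sq]
  exact (mul_le_eight_mul_sq_sqrt_sub_sqrt (by positivity) hv
    (pow_le_one₀ (by norm_num) (by norm_num))).trans (by linarith)

theorem dyadicPoint_separated_of_lt (hj : j < j') (hj' : j' < 2 ^ N) :
    (1 - ‖dyadicPoint N j'‖ ^ 2) * (1 - ‖dyadicPoint N j‖ ^ 2) ≤
      8 * ‖dyadicPoint N j' - dyadicPoint N j‖ ^ 2 := by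
  set u : ℝ := 2⁻¹ ^ N with hu_def
  set s : ℝ := ((j' : ℝ) - j) / 2 ^ N
  have h2N : (0 : ℝ) < 2 ^ N := by positivity
  have hu : u = (2 ^ N)⁻¹ := inv_pow 2 N
  have hj_real : (j : ℝ) + 1 ≤ j' := by exact_mod_cast hj
  have hj'_real : (j' : ℝ) + 1 ≤ 2 ^ N := by exact_mod_cast hj'
  have hu_pos : 0 < u := by positivity
  have hu_half : u ≤ 1 / 2 := by
    rw [hu]; exact inv_le_of_inv_le₀ (by norm_num) (by linarith [Nat.cast_nonneg (α := ℝ) j])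
  have hs₀ : u ≤ s := by
    rw [hu, le_div_iff₀ h2N, inv_mul_cancel₀ h2N.ne']; linarith
  have hs₁ : s ≤ 1 - u := by
    rw [hu, div_le_iff₀ h2N, sub_mul, inv_mul_cancel₀ h2N.ne']
    linarith [Nat.cast_nonneg (α := ℝ) j]
  have hsin : 2 * u ≤ Real.sin (π * s) :=
    (mul_le_mul_of_nonneg_left (le_min hs₀ (by linarith)) zero_le_two).trans
      (two_mul_min_le_sin_pi_mul (by linarith) (by linarith))
  have hdist : ‖dyadicPoint N j' - dyadicPoint N j‖ ^ 2 = (1 - u) * (4 * Real.sin (π * s) ^ 2) := by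
    rw [norm_dyadicPoint_sub_same_level, mul_pow, sq_sqrt (by linarith), mul_pow, sq_abs]
    ring
  rw [one_sub_norm_dyadicPoint_sq, one_sub_norm_dyadicPoint_sq, ← hu_def, hdist]
  nlinarith

theorem dyadicPoint_separated (hj : j < 2 ^ N) (hj' : j' < 2 ^ N') (hne : (N, j) ≠ (N', j')) :
    (1 - ‖dyadicPoint N j‖ ^ 2) * (1 - ‖dyadicPoint N' j'‖ ^ 2) ≤
      8 * ‖dyadicPoint N j - dyadicPoint N' j'‖ ^ 2 := by
  rcases lt_trichotomy N N' with hN | rfl | hN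
  · exact dyadicPoint_separated_of_level_lt hN
  · rcases lt_trichotomy j j' with hjj | rfl | hjj
    · rw [mul_comm, norm_sub_rev]; exact dyadicPoint_separated_of_lt hjj hj'
    · exact absurd rfl hne
    · exact dyadicPoint_separated_of_lt hjj hj
  · rw [mul_comm, norm_sub_rev]; exact dyadicPoint_separated_of_level_lt hN

end Separation

theorem gInnerAbs_zRect (N₁ j₁ N₂ j₂ N₁' j₁' N₂' j₂' : ℕ) :
    gInnerAbs 2 (zRect N₁ j₁ N₂ j₂) (zRect N₁' j₁' N₂' j₂') =
      szegoFactor (dyadicPoint N₁ j₁) (dyadicPoint N₁' j₁') *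
        szegoFactor (dyadicPoint N₂ j₂) (dyadicPoint N₂' j₂') := by
  simp only [gInnerAbs, zRect_eq, Fin.prod_univ_two]
  rfl

theorem szegoFactor_dyadicPoint_sq_le_one (N j N' j' : ℕ) :
    szegoFactor (dyadicPoint N j) (dyadicPoint N' j') ^ 2 ≤ 1 :=
  szegoFactor_sq_le_one (norm_dyadicPoint_le_one _ _) (norm_dyadicPoint_le_one _ _)

theorem szegoFactor_dyadicPoint_sq_le {N j N' j' : ℕ} (hj : j < 2 ^ N) (hj' : j' < 2 ^ N')
    (hne : (N, j) ≠ (N', j')) :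
    szegoFactor (dyadicPoint N j) (dyadicPoint N' j') ^ 2 ≤ 8 / 9 := by
  convert szegoFactor_sq_le_of_le_mul_norm_sub_sq (by norm_num) (norm_dyadicPoint_le_one _ _)
    (norm_dyadicPoint_le_one _ _) (dyadicPoint_separated hj hj' hne) using 1
  norm_num

/-- There is `γ ∈ (0,1)` such that the points associated to any two distinct
dyadic rectangles in `[0,1)²` satisfy `|⟨g_{z_R}, g_{z_{R'}}⟩|² ≤ 1 - γ²`:
the collection `{z_R}` is weakly separated with a uniform constant. -/
theorem statement16 :
    ∃ γ : ℝ, 0 < γ ∧ γ < 1 ∧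
      ∀ N₁ j₁ N₂ j₂ N₁' j₁' N₂' j₂' : ℕ,
        j₁ < 2 ^ N₁ → j₂ < 2 ^ N₂ → j₁' < 2 ^ N₁' → j₂' < 2 ^ N₂' →
        (N₁, j₁, N₂, j₂) ≠ (N₁', j₁', N₂', j₂') →
        gInnerAbs 2 (zRect N₁ j₁ N₂ j₂) (zRect N₁' j₁' N₂' j₂') ^ 2 ≤ 1 - γ ^ 2 := by
  refine ⟨1 / 3, by norm_num, by norm_num, ?_⟩
  intro N₁ j₁ N₂ j₂ N₁' j₁' N₂' j₂' hj₁ hj₂ hj₁' hj₂' hne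
  rw [gInnerAbs_zRect, mul_pow, show (1 : ℝ) - (1 / 3) ^ 2 = 8 / 9 by norm_num]
  by_cases h₁ : (N₁, j₁) = (N₁', j₁')
  · have h₂ : (N₂, j₂) ≠ (N₂', j₂') := fun h₂ => hne (by simp_all)
    simpa using mul_le_mul (szegoFactor_dyadicPoint_sq_le_one _ _ _ _)
      (szegoFactor_dyadicPoint_sq_le hj₂ hj₂' h₂) (sq_nonneg _) zero_le_one
  · simpa using mul_le_mul (szegoFactor_dyadicPoint_sq_le hj₁ hj₁' h₁)
      (szegoFactor_dyadicPoint_sq_le_one _ _ _ _) (sq_nonneg _) (by norm_num)
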